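/- Let c_{mp,m′p′}^{nq} be the structure constants determined by [B_{mp}, B_{m′p′}] = Σ_{n,q} c_{mp,m′p′}^{nq} B_{nq} (these same constants satisfy [B̂_{mp}, B̂_{m′p′}] = Σ_{n,q} c_{mp,m′p′}^{nq} B̂_{nq}). Then for Φ̃ = Φ or Φ̂: [∂/∂β_{mp}, ∂/∂β_{m′p′}] Φ̃ = −Σ_{n,q} c_{mp,m′p′}^{nq} ∂Φ̃/∂β_{nq}; [∂/∂β̂_{mp}, ∂/∂β̂_{m′p′}] Φ̃ = Σ_{n,q} c_{mp,m′p′}^{nq} ∂Φ̃/∂β̂_{nq}; and [∂/∂β_{mp}, ∂/∂β̂_{m′p′}] Φ̃ = 0. In other words, the additional symmetries generate a W_{1+∞} × W_{1+∞} algebra. -/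

import Mathlib

/-!
Every additional flow `T` is a derivation of `D` commuting with `(·)₊` that moves `Φ` and `Φ̂` by
left multiplication with `A = -(X)₋` and `Â = (X)₊`. Since `B_{nq}` (resp. `B̂_{nq}`) is built from
`Φ` (resp. `Φ̂`) and `T`-constant operators by conjugation, `T` acts on it as `⁅A, ·⁆`
(resp. `⁅Â, ·⁆`). The commutator of two flows on `Φ` is `(T₁ A₂ - T₂ A₁ - ⁅A₁, A₂⁆) Φ`, and the `R`-matrix identity
`R (⁅R x, y⁆ + ⁅x, R y⁆) = R ⁅x, y⁆ + ⁅R x, R y⁆` of the splitting `D = D₊ ⊕ D₋` turns this into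
`±(⁅X₁, X₂⁆)₋ Φ` (and the one on `Φ̂` into `∓(⁅X₁, X₂⁆)₊ Φ̂`) for two flows of the same kind, and
into `0` for one flow of each kind; the structure constants then enter linearly.
-/

namespace ExtendedKP

attribute [local instance] LieRing.ofAssociativeRing

variable {D : Type*} [Ring D]

def IsLeibniz (T : D →+ D) : Prop := ∀ x y, T (x * y) = T x * y + x * T y

namespace IsLeibniz

variable {T : D →+ D} (hT : IsLeibniz T)
include hT

theorem map_one : T 1 = 0 := by
  simpa using hT 1 1

theorem map_units_inv (u : Dˣ) : T ↑u⁻¹ = -(↑u⁻¹ * T u * ↑u⁻¹) := by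
  have h : T u * ↑u⁻¹ + u * T ↑u⁻¹ = 0 := by rw [← hT, Units.mul_inv, hT.map_one]
  calc T ↑u⁻¹ = ↑u⁻¹ * (u * T ↑u⁻¹) := by rw [← mul_assoc, Units.inv_mul, one_mul]
    _ = -(↑u⁻¹ * T u * ↑u⁻¹) := by rw [eq_neg_of_add_eq_zero_right h]; noncomm_ring

theorem map_units_inv_eq_zero {u : Dˣ} (hu : T u = 0) : T ↑u⁻¹ = 0 := by
  rw [hT.map_units_inv, hu, mul_zero, zero_mul, neg_zero]

def adEqLocus (G : D) : Subring D where
  carrier := {a | T a = ⁅G, a⁆}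
  mul_mem' {a b} ha hb := by
    simp only [Set.mem_ofPred_eq, Ring.lie_def] at *
    rw [hT, ha, hb]; noncomm_ring
  one_mem' := by simp [hT.map_one, Ring.lie_def]
  add_mem' {a b} ha hb := by
    simp only [Set.mem_ofPred_eq, Ring.lie_def] at *
    rw [map_add, ha, hb]; noncomm_ring
  zero_mem' := by simp [Ring.lie_def]
  neg_mem' {a} ha := by
    simp only [Set.mem_ofPred_eq, Ring.lie_def] at *
    rw [map_neg, ha]; noncomm_ring

theorem mem_adEqLocus {G a : D} : a ∈ hT.adEqLocus G ↔ T a = ⁅G, a⁆ := Iff.rfl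

variable {G : D}

theorem units_inv_mem_adEqLocus {u : Dˣ} (hu : ↑u ∈ hT.adEqLocus G) :
    ↑u⁻¹ ∈ hT.adEqLocus G := by
  rw [mem_adEqLocus] at *
  rw [hT.map_units_inv, hu, Ring.lie_def, Ring.lie_def]
  calc -(↑u⁻¹ * (G * ↑u - ↑u * G) * ↑u⁻¹)
      = ↑u⁻¹ * ↑u * G * ↑u⁻¹ - ↑u⁻¹ * G * (↑u * ↑u⁻¹) := by noncomm_ring
    _ = G * ↑u⁻¹ - ↑u⁻¹ * G := by rw [Units.inv_mul, Units.mul_inv, one_mul, mul_one]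

theorem units_zpow_mem_adEqLocus {u : Dˣ} (hu : ↑u ∈ hT.adEqLocus G) (p : ℤ) :
    ↑(u ^ p) ∈ hT.adEqLocus G := by
  have : u ∈ (hT.adEqLocus G).toSubmonoid.units :=
    (Submonoid.mem_units_iff _ _).2 ⟨hu, hT.units_inv_mem_adEqLocus hu⟩
  exact ((Submonoid.mem_units_iff _ _).1 (zpow_mem this p)).1

theorem conj_mem_adEqLocus {Φ : Dˣ} {c : D} (hc : T c = 0) (hΦ : T Φ = G * Φ) :
    ↑Φ * c * ↑Φ⁻¹ ∈ hT.adEqLocus G := by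
  rw [mem_adEqLocus, hT, hT, hc, hΦ, hT.map_units_inv, hΦ, Ring.lie_def]
  calc (G * ↑Φ * c + ↑Φ * 0) * ↑Φ⁻¹ + ↑Φ * c * -(↑Φ⁻¹ * (G * ↑Φ) * ↑Φ⁻¹)
      = G * (↑Φ * c * ↑Φ⁻¹) - ↑Φ * c * ↑Φ⁻¹ * G * (↑Φ * ↑Φ⁻¹) := by noncomm_ring
    _ = G * (↑Φ * c * ↑Φ⁻¹) - ↑Φ * c * ↑Φ⁻¹ * G := by rw [Units.mul_inv, mul_one]

theorem dressed_mem_adEqLocus {Φ d : Dˣ} {Ξ : D} (hΞ : T Ξ = 0) (hd : T d = 0)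
    (hΦ : T Φ = G * Φ) (m : ℕ) (p : ℤ) :
    (↑Φ * Ξ * ↑Φ⁻¹) ^ m * ↑((Φ * d * Φ⁻¹) ^ p) ∈ hT.adEqLocus G := by
  refine mul_mem (pow_mem (hT.conj_mem_adEqLocus hΞ hΦ) m) (hT.units_zpow_mem_adEqLocus ?_ p)
  simpa only [Units.val_mul] using hT.conj_mem_adEqLocus hd hΦ

theorem apply_lie_apply_sub {T' : D →+ D} (hT' : IsLeibniz T') {Φ A A' : D}
    (hA : T Φ = A * Φ) (hA' : T' Φ = A' * Φ) :
    T (T' Φ) - T' (T Φ) = (T A' - T' A - ⁅A, A'⁆) * Φ := by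
  rw [hA', hA, hT, hT', hA, hA', Ring.lie_def]; noncomm_ring

end IsLeibniz

/-- `D = R D ⊕ R' D` with both summands closed under multiplication, as `D = D₊ ⊕ D₋`. -/
structure IsSplitting (R R' : D →+ D) : Prop where
  add_apply : ∀ x, R x + R' x = x
  map_mul_map : ∀ x y, R (R x * R y) = R x * R y
  map_mul_map' : ∀ x y, R' (R' x * R' y) = R' x * R' y

namespace IsSplitting

variable {R R' : D →+ D} (h : IsSplitting R R')
include h

theorem symm : IsSplitting R' R :=
  ⟨fun x => by rw [add_comm, h.add_apply], h.map_mul_map', h.map_mul_map⟩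

theorem map_lie_map (x y : D) : R ⁅R x, R y⁆ = ⁅R x, R y⁆ := by
  rw [Ring.lie_def, map_sub, h.map_mul_map, h.map_mul_map]

theorem map_lie_map_compl (x y : D) : R ⁅R' x, R' y⁆ = 0 := by
  have := h.add_apply ⁅R' x, R' y⁆
  rwa [h.symm.map_lie_map, add_eq_right] at this

theorem map_lie_sub_lie (x y : D) : R (⁅R x, R y⁆ - ⁅R' x, R' y⁆) = ⁅R x, R y⁆ := by
  rw [map_sub, h.map_lie_map, h.map_lie_map_compl, sub_zero]

theorem lie_map_add_lie_map (x y : D) :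
    ⁅R x, y⁆ + ⁅x, R y⁆ = ⁅x, y⁆ + (⁅R x, R y⁆ - ⁅R' x, R' y⁆) := by
  have e : ∀ a a' b b' : D,
      ⁅a, b + b'⁆ + ⁅a + a', b⁆ = ⁅a + a', b + b'⁆ + (⁅a, b⁆ - ⁅a', b'⁆) := by
    intros; simp only [Ring.lie_def]; noncomm_ring
  simpa only [h.add_apply] using e (R x) (R' x) (R y) (R' y)

theorem lie_map_sub_lie_compl (x y : D) :
    ⁅R x, y⁆ - ⁅x, R' y⁆ = ⁅R x, R y⁆ - ⁅R' x, R' y⁆ := by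
  have e : ∀ a a' b b' : D, ⁅a, b + b'⁆ - ⁅a + a', b'⁆ = ⁅a, b⁆ - ⁅a', b'⁆ := by
    intros; simp only [Ring.lie_def]; noncomm_ring
  simpa only [h.add_apply] using e (R x) (R' x) (R y) (R' y)

/-- The classical `R`-matrix identity of the splitting. -/
theorem map_lie_map_add_lie_map (x y : D) :
    R (⁅R x, y⁆ + ⁅x, R y⁆) = R ⁅x, y⁆ + ⁅R x, R y⁆ := by
  rw [h.lie_map_add_lie_map, map_add, h.map_lie_sub_lie]

theorem map_lie_compl_add_lie_compl (x y : D) :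
    R (⁅R' x, y⁆ + ⁅x, R' y⁆) = R ⁅x, y⁆ - ⁅R x, R y⁆ := by
  rw [h.symm.lie_map_add_lie_map, ← neg_sub, ← sub_eq_add_neg, map_sub, h.map_lie_sub_lie]

theorem map_comm_compl {T : D →+ D} (hT : ∀ x, T (R x) = R (T x)) (x : D) :
    T (R' x) = R' (T x) := by
  rw [eq_sub_of_add_eq' (h.add_apply x), eq_sub_of_add_eq' (h.add_apply (T x)), map_sub, hT]

end IsSplitting

structure IsDressingFlow (R T : D →+ D) (Φ X : D) : Prop where
  leibniz : IsLeibniz T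
  map_comm : ∀ x, T (R x) = R (T x)
  apply_eq : T Φ = R X * Φ

namespace IsDressingFlow

variable {R R' T₁ T₂ : D →+ D} {Φ X₁ X₂ : D} (h : IsSplitting R R')
  (h₁ : IsDressingFlow R T₁ Φ X₁) (h₂ : IsDressingFlow R T₂ Φ X₂)
include h h₁ h₂

theorem apply_lie_apply_sub_of_map (h₁₂ : T₁ X₂ = ⁅R X₁, X₂⁆) (h₂₁ : T₂ X₁ = ⁅R X₂, X₁⁆) :
    T₁ (T₂ Φ) - T₂ (T₁ Φ) = R ⁅X₁, X₂⁆ * Φ := by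
  rw [h₁.leibniz.apply_lie_apply_sub h₂.leibniz h₁.apply_eq h₂.apply_eq, h₁.map_comm,
    h₂.map_comm, h₁₂, h₂₁, ← lie_skew (R X₂) X₁, map_neg, sub_neg_eq_add, ← map_add,
    h.map_lie_map_add_lie_map, add_sub_cancel_right]

theorem apply_lie_apply_sub_of_compl (h₁₂ : T₁ X₂ = ⁅-R' X₁, X₂⁆)
    (h₂₁ : T₂ X₁ = ⁅-R' X₂, X₁⁆) :
    T₁ (T₂ Φ) - T₂ (T₁ Φ) = -R ⁅X₁, X₂⁆ * Φ := by
  rw [h₁.leibniz.apply_lie_apply_sub h₂.leibniz h₁.apply_eq h₂.apply_eq, h₁.map_comm,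
    h₂.map_comm, h₁₂, h₂₁, neg_lie, neg_lie, ← lie_skew (R' X₂) X₁, neg_neg, map_neg,
    ← neg_add', ← map_add, h.map_lie_compl_add_lie_compl, neg_sub, sub_sub_cancel_left]

theorem apply_comm_of_map_of_compl (h₁₂ : T₁ X₂ = ⁅R X₁, X₂⁆)
    (h₂₁ : T₂ X₁ = ⁅-R' X₂, X₁⁆) :
    T₁ (T₂ Φ) = T₂ (T₁ Φ) := by
  rw [← sub_eq_zero, h₁.leibniz.apply_lie_apply_sub h₂.leibniz h₁.apply_eq h₂.apply_eq,
    h₁.map_comm, h₂.map_comm, h₁₂, h₂₁, neg_lie, ← lie_skew (R' X₂) X₁, neg_neg, ← map_sub,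
    h.lie_map_sub_lie_compl, h.map_lie_sub_lie, sub_self, zero_mul]

end IsDressingFlow

/-- An additional flow of the extended KP hierarchy with generator `X`:
`T Φ = -(X)₋ Φ` and `T Φ̂ = (X)₊ Φ̂`, for the splitting `π = (·)₊`, `ν = (·)₋`. -/
structure IsAdditionalFlow (π ν T : D →+ D) (Φ Φh X : D) : Prop where
  leibniz : IsLeibniz T
  map_comm : ∀ x, T (π x) = π (T x)
  apply_Φ : T Φ = -ν X * Φ
  apply_Φh : T Φh = π X * Φh

namespace IsAdditionalFlow

variable {π ν T T₁ T₂ : D →+ D} {Φ Φh X X₁ X₂ : D} (h : IsSplitting π ν)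
include h

theorem isDressingFlow_Φ (hT : IsAdditionalFlow π ν T Φ Φh X) : IsDressingFlow ν T Φ (-X) :=
  ⟨hT.leibniz, h.map_comm_compl hT.map_comm, by rw [map_neg]; exact hT.apply_Φ⟩

omit h in
theorem isDressingFlow_Φh (hT : IsAdditionalFlow π ν T Φ Φh X) : IsDressingFlow π T Φh X :=
  ⟨hT.leibniz, hT.map_comm, hT.apply_Φh⟩

omit h in
theorem apply_neg_of_Φ_family (h₁₂ : T₁ X₂ = ⁅-ν X₁, X₂⁆) : T₁ (-X₂) = ⁅ν (-X₁), -X₂⁆ := by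
  rw [map_neg, map_neg, h₁₂, lie_neg]

omit h in
theorem apply_neg_of_Φh_family (h₁₂ : T₁ X₂ = ⁅π X₁, X₂⁆) : T₁ (-X₂) = ⁅-π (-X₁), -X₂⁆ := by
  rw [map_neg, map_neg, neg_neg, h₁₂, lie_neg]

variable (h₁ : IsAdditionalFlow π ν T₁ Φ Φh X₁) (h₂ : IsAdditionalFlow π ν T₂ Φ Φh X₂)
include h₁ h₂

theorem lie_apply_of_Φ_family (h₁₂ : T₁ X₂ = ⁅-ν X₁, X₂⁆) (h₂₁ : T₂ X₁ = ⁅-ν X₂, X₁⁆) :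
    T₁ (T₂ Φ) - T₂ (T₁ Φ) = ν ⁅X₁, X₂⁆ * Φ ∧
      T₁ (T₂ Φh) - T₂ (T₁ Φh) = -π ⁅X₁, X₂⁆ * Φh := by
  refine ⟨?_, (h₁.isDressingFlow_Φh).apply_lie_apply_sub_of_compl h (h₂.isDressingFlow_Φh)
    h₁₂ h₂₁⟩
  rw [(h₁.isDressingFlow_Φ h).apply_lie_apply_sub_of_map h.symm (h₂.isDressingFlow_Φ h)
    (apply_neg_of_Φ_family h₁₂) (apply_neg_of_Φ_family h₂₁), neg_lie, lie_neg, neg_neg]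

theorem lie_apply_of_Φh_family (h₁₂ : T₁ X₂ = ⁅π X₁, X₂⁆) (h₂₁ : T₂ X₁ = ⁅π X₂, X₁⁆) :
    T₁ (T₂ Φ) - T₂ (T₁ Φ) = -ν ⁅X₁, X₂⁆ * Φ ∧
      T₁ (T₂ Φh) - T₂ (T₁ Φh) = π ⁅X₁, X₂⁆ * Φh := by
  refine ⟨?_, (h₁.isDressingFlow_Φh).apply_lie_apply_sub_of_map h (h₂.isDressingFlow_Φh)
    h₁₂ h₂₁⟩
  rw [(h₁.isDressingFlow_Φ h).apply_lie_apply_sub_of_compl h.symm (h₂.isDressingFlow_Φ h)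
    (apply_neg_of_Φh_family h₁₂) (apply_neg_of_Φh_family h₂₁), neg_lie, lie_neg, neg_neg]

theorem apply_comm_of_Φh_family_of_Φ_family (h₁₂ : T₁ X₂ = ⁅π X₁, X₂⁆)
    (h₂₁ : T₂ X₁ = ⁅-ν X₂, X₁⁆) :
    T₁ (T₂ Φ) = T₂ (T₁ Φ) ∧ T₁ (T₂ Φh) = T₂ (T₁ Φh) :=
  ⟨((h₂.isDressingFlow_Φ h).apply_comm_of_map_of_compl h.symm (h₁.isDressingFlow_Φ h)
      (apply_neg_of_Φ_family h₂₁) (apply_neg_of_Φh_family h₁₂)).symm,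
    (h₁.isDressingFlow_Φh).apply_comm_of_map_of_compl h (h₂.isDressingFlow_Φh) h₁₂ h₂₁⟩

end IsAdditionalFlow

theorem map_lie_mul_eq_finsuppSum {ι : Type*} (R : D →+ D) {Y₁ Y₂ Φ : D} {Y F : ι → D}
    {c : ι →₀ ℤ} (hc : Y₁ * Y₂ - Y₂ * Y₁ = c.sum fun i k => k • Y i)
    (hF : ∀ i, F i = R (Y i) * Φ) :
    R ⁅Y₁, Y₂⁆ * Φ = c.sum fun i k => k • F i := by
  simp only [Ring.lie_def, hc, hF, map_finsuppSum, Finsupp.sum_mul, map_zsmul, smul_mul_assoc]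

end ExtendedKP

open ExtendedKP

theorem stmt_17 {D : Type*} [Ring D]
    (pos neg : D → D)
    (hsplit : ∀ x, pos x + neg x = x)
    (hpos_add : ∀ x y, pos (x + y) = pos x + pos y)
    (hpos_mul : ∀ x y, pos (pos x * pos y) = pos x * pos y)
    (hneg_mul : ∀ x y, neg (neg x * neg y) = neg x * neg y)
    (del Φ Φh : Dˣ)
    (Ξ Ξh : D)
    (S Sh : ℕ → ℤ → D → D)
    (hS_add : ∀ m p x y, S m p (x + y) = S m p x + S m p y)
    (hS_mul : ∀ m p x y, S m p (x * y) = S m p x * y + x * S m p y)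
    (hS_pos : ∀ m p x, S m p (pos x) = pos (S m p x))
    (hS_del : ∀ m p, S m p (del : D) = 0)
    (hS_Ξ : ∀ m p, S m p Ξ = 0) (hS_Ξh : ∀ m p, S m p Ξh = 0)
    (hSh_add : ∀ m p x y, Sh m p (x + y) = Sh m p x + Sh m p y)
    (hSh_mul : ∀ m p x y, Sh m p (x * y) = Sh m p x * y + x * Sh m p y)
    (hSh_pos : ∀ m p x, Sh m p (pos x) = pos (Sh m p x))
    (hSh_del : ∀ m p, Sh m p (del : D) = 0)
    (hSh_Ξ : ∀ m p, Sh m p Ξ = 0) (hSh_Ξh : ∀ m p, Sh m p Ξh = 0) :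
    let P : Dˣ := Φ * del * Φ⁻¹
    let Ph : Dˣ := Φh * del⁻¹ * Φh⁻¹
    let M : D := (Φ : D) * Ξ * ((Φ⁻¹ : Dˣ) : D)
    let Mh : D := (Φh : D) * Ξh * ((Φh⁻¹ : Dˣ) : D)
    let Bop : ℕ → ℤ → D := fun m p => M ^ m * ((P ^ p : Dˣ) : D)
    let Bhop : ℕ → ℤ → D := fun m p => Mh ^ m * ((Ph ^ (-p) : Dˣ) : D)
    -- the additional flows:
    (∀ (m : ℕ) (p : ℤ), S m p (Φ : D) = -(neg (Bop m p)) * (Φ : D)) →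
    (∀ (m : ℕ) (p : ℤ), S m p (Φh : D) = pos (Bop m p) * (Φh : D)) →
    (∀ (m : ℕ) (p : ℤ), Sh m p (Φ : D) = -(neg (Bhop m p)) * (Φ : D)) →
    (∀ (m : ℕ) (p : ℤ), Sh m p (Φh : D) = pos (Bhop m p) * (Φh : D)) →
    -- conclusion:
    (∀ (m m' : ℕ) (p p' : ℤ) (c : ℕ × ℤ →₀ ℤ),
      -- the structure constants of the W_{1+∞} algebra …
      Bop m p * Bop m' p' - Bop m' p' * Bop m p
        = c.sum (fun nq k => k • Bop nq.1 nq.2) →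
      -- … are also those for the hatted family
      Bhop m p * Bhop m' p' - Bhop m' p' * Bhop m p
        = c.sum (fun nq k => k • Bhop nq.1 nq.2) →
      -- [∂/∂β_{mp}, ∂/∂β_{m′p′}]Φ̃ = −Σ c^{nq} ∂Φ̃/∂β_{nq}
      ((S m p (S m' p' (Φ : D)) - S m' p' (S m p (Φ : D))
          = -(c.sum fun nq k => k • S nq.1 nq.2 (Φ : D))) ∧
       (S m p (S m' p' (Φh : D)) - S m' p' (S m p (Φh : D))
          = -(c.sum fun nq k => k • S nq.1 nq.2 (Φh : D))) ∧
       -- [∂/∂β̂_{mp}, ∂/∂β̂_{m′p′}]Φ̃ = Σ c^{nq} ∂Φ̃/∂β̂_{nq}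
       (Sh m p (Sh m' p' (Φ : D)) - Sh m' p' (Sh m p (Φ : D))
          = c.sum fun nq k => k • Sh nq.1 nq.2 (Φ : D)) ∧
       (Sh m p (Sh m' p' (Φh : D)) - Sh m' p' (Sh m p (Φh : D))
          = c.sum fun nq k => k • Sh nq.1 nq.2 (Φh : D)) ∧
       -- [∂/∂β_{mp}, ∂/∂β̂_{m′p′}]Φ̃ = 0
       (S m p (Sh m' p' (Φ : D)) - Sh m' p' (S m p (Φ : D)) = 0) ∧
       (S m p (Sh m' p' (Φh : D)) - Sh m' p' (S m p (Φh : D)) = 0))) := by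
  intro P Ph M Mh B Bh hSΦ hSΦh hShΦ hShΦh m m' p p' c hc hch
  let π : D →+ D := AddMonoidHom.mk' pos hpos_add
  let ν : D →+ D := AddMonoidHom.mk' neg fun x y => by
    simp only [eq_sub_of_add_eq' (hsplit _), hpos_add]; abel
  have hπν : IsSplitting π ν := ⟨hsplit, hpos_mul, hneg_mul⟩
  let T (m : ℕ) (p : ℤ) : D →+ D := AddMonoidHom.mk' (S m p) (hS_add m p)
  let Th (m : ℕ) (p : ℤ) : D →+ D := AddMonoidHom.mk' (Sh m p) (hSh_add m p)
  have f (m : ℕ) (p : ℤ) : IsAdditionalFlow π ν (T m p) Φ Φh (B m p) :=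
    ⟨hS_mul m p, hS_pos m p, hSΦ m p, hSΦh m p⟩
  have g (m : ℕ) (p : ℤ) : IsAdditionalFlow π ν (Th m p) Φ Φh (Bh m p) :=
    ⟨hSh_mul m p, hSh_pos m p, hShΦ m p, hShΦh m p⟩
  have hT_B (m n : ℕ) (p q : ℤ) : T m p (B n q) = ⁅-ν (B m p), B n q⁆ :=
    (f m p).leibniz.dressed_mem_adEqLocus (hS_Ξ m p) (hS_del m p) (hSΦ m p) n q
  have hT_Bh (m n : ℕ) (p q : ℤ) : T m p (Bh n q) = ⁅π (B m p), Bh n q⁆ :=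
    (f m p).leibniz.dressed_mem_adEqLocus (hS_Ξh m p)
      ((f m p).leibniz.map_units_inv_eq_zero (hS_del m p)) (hSΦh m p) n (-q)
  have hTh_B (m n : ℕ) (p q : ℤ) : Th m p (B n q) = ⁅-ν (Bh m p), B n q⁆ :=
    (g m p).leibniz.dressed_mem_adEqLocus (hSh_Ξ m p) (hSh_del m p) (hShΦ m p) n q
  have hTh_Bh (m n : ℕ) (p q : ℤ) : Th m p (Bh n q) = ⁅π (Bh m p), Bh n q⁆ :=
    (g m p).leibniz.dressed_mem_adEqLocus (hSh_Ξh m p)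
      ((g m p).leibniz.map_units_inv_eq_zero (hSh_del m p)) (hShΦh m p) n (-q)
  obtain ⟨hS_lie_Φ, hS_lie_Φh⟩ :=
    (f m p).lie_apply_of_Φ_family hπν (f m' p') (hT_B ..) (hT_B ..)
  obtain ⟨hSh_lie_Φ, hSh_lie_Φh⟩ :=
    (g m p).lie_apply_of_Φh_family hπν (g m' p') (hTh_Bh ..) (hTh_Bh ..)
  obtain ⟨hS_Sh_comm_Φ, hS_Sh_comm_Φh⟩ :=
    (f m p).apply_comm_of_Φh_family_of_Φ_family hπν (g m' p') (hT_Bh ..) (hTh_B ..)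
  refine ⟨hS_lie_Φ.trans ?_, hS_lie_Φh.trans ?_, hSh_lie_Φ.trans ?_, hSh_lie_Φh.trans ?_,
    sub_eq_zero.2 hS_Sh_comm_Φ, sub_eq_zero.2 hS_Sh_comm_Φh⟩
  · rw [← neg_neg (ν _), ← AddMonoidHom.neg_apply, neg_mul,
      map_lie_mul_eq_finsuppSum (-ν) hc fun _ => hSΦ _ _]
  · rw [neg_mul, map_lie_mul_eq_finsuppSum π hc fun _ => hSΦh _ _]
  · rw [← AddMonoidHom.neg_apply, map_lie_mul_eq_finsuppSum (-ν) hch fun _ => hShΦ _ _]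
  · exact map_lie_mul_eq_finsuppSum π hch fun _ => hShΦh _ _
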